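/- arXiv:2502.07452 — 2 statements merged into one kernel-verified Lean document; each statement's English description precedes it below -/
import Mathlib

section
/- For any weighted argumentation framework, the weighted max-based semantics equation has a unique solution with values in [0,1] on acyclic graphs: if the attack relation is well-founded, there is a unique function σ : A → [0,1] with σ(a) = w(a)/(1 + max_{b ∈ Att(a)} σ(b)) (with the max over the empty set taken as 0). -/
/-!
A value `σ a` is pinned down by the values on the attackers of `a`, so on a well-founded attack
relation the equation can be read as a definition by well-founded recursion, which gives existence,
and well-founded induction shows any two solutions agree. Every solution lies in `[0,1]` because
`w a ∈ [0,1]` is divided by `1 + m` with `m ≥ 0`.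
-/

theorem WellFounded.existsUnique_eq_of_local {α β : Type*} [Nonempty β] {r : α → α → Prop}
    (hr : WellFounded r) (Φ : (α → β) → α → β)
    (hΦ : ∀ σ τ a, (∀ b, r b a → σ b = τ b) → Φ σ a = Φ τ a) :
    ∃! σ : α → β, ∀ a, σ a = Φ σ a := by
  classical
  let σ : α → β := hr.fix fun a rec =>
    Φ (fun b => if h : r b a then rec b h else Classical.arbitrary β) a
  have hσ : ∀ a, σ a = Φ σ a := fun a =>
    (hr.fix_eq _ a).trans (hΦ _ _ a fun b hb => dif_pos hb)
  refine ⟨σ, hσ, fun τ hτ => funext fun a => ?_⟩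
  induction a using hr.induction with
  | _ a ih => rw [hτ a, hσ a]; exact hΦ _ _ a ih

theorem Finset.fold_max_zero_nonneg {ι : Type*} (s : Finset ι) (f : ι → ℝ) :
    0 ≤ s.fold max 0 f :=
  Finset.le_fold_max 0 |>.mpr (Or.inl le_rfl)

theorem div_one_add_mem_Icc {w m : ℝ} (hw : w ∈ Set.Icc (0 : ℝ) 1) (hm : 0 ≤ m) :
    w / (1 + m) ∈ Set.Icc (0 : ℝ) 1 := by
  have hpos : 0 < 1 + m := by linarith
  exact ⟨div_nonneg hw.1 hpos.le, (div_le_one hpos).mpr (by linarith [hw.2])⟩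

theorem stmt_3_general {A : Type*} [Fintype A]
    (C : A → A → Prop) [DecidableRel C] (w : A → ℝ)
    (hw : ∀ a, w a ∈ Set.Icc (0:ℝ) 1)
    (hwf : WellFounded (fun b a => C b a)) :
    ∃! σ : A → ℝ, (∀ a, σ a ∈ Set.Icc (0:ℝ) 1) ∧
      (∀ a, σ a = w a / (1 + (Finset.univ.filter (fun b => C b a)).fold max 0 σ)) := by
  obtain ⟨σ, hσ, hσ_unique⟩ := hwf.existsUnique_eq_of_local
    (fun σ a => w a / (1 + (Finset.univ.filter (fun b => C b a)).fold max 0 σ))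
    fun σ τ a h => by
      rw [Finset.fold_congr fun b hb => h b (Finset.mem_filter.mp hb).2]
  have hσ_mem : ∀ a, σ a ∈ Set.Icc (0:ℝ) 1 := fun a =>
    hσ a ▸ div_one_add_mem_Icc (hw a) (Finset.fold_max_zero_nonneg _ _)
  exact ⟨σ, ⟨hσ_mem, hσ⟩, fun τ hτ => hσ_unique τ hτ.2⟩

/-- On a finite framework whose attack relation is well-founded (acyclic),
the weighted max-based semantics equation has a unique solution `σ : A → [0,1]`,
where `σ(a) = w(a)/(1 + max_{b ∈ Att(a)} σ(b))` with the empty max taken as 0. -/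
theorem stmt_3 {A : Type*} [Fintype A] [DecidableEq A]
    (C : A → A → Prop) [DecidableRel C] (w : A → ℝ)
    (hw : ∀ a, w a ∈ Set.Icc (0:ℝ) 1)
    (hwf : WellFounded (fun b a => C b a)) :
    ∃! σ : A → ℝ, (∀ a, σ a ∈ Set.Icc (0:ℝ) 1) ∧
      (∀ a, σ a = w a / (1 + (Finset.univ.filter (fun b => C b a)).fold max 0 σ)) :=
  stmt_3_general C w hw hwf
end

section
/- The converse of the previous implication fails: there exists a finite directed graph and a vector p ∈ [0,1]ⁿ that is max-based-realizable but not h-categorizer-realizable. For example, with three arguments b, c attacking a and p_a = p_b = p_c = 0.6: max-based requires 0.6·(1+0.6) = 0.96 ≤ 1 (realizable), but h-categorizer requires 0.6·(1+1.2) = 1.32 > 1 (not realizable). -/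
/-- Attack structure on three arguments `a = 0`, `b = 1`, `c = 2`:
`b` and `c` attack `a`. -/
def att16 : Fin 3 → Finset (Fin 3) := fun j => if j = 0 then {1, 2} else ∅

/-- The converse fails: with `b, c` attacking `a` and `p = (0.6, 0.6, 0.6)`,
`p` is max-based-realizable but not h-categorizer-realizable. -/
theorem stmt_16 :
    (∀ j, (fun _ : Fin 3 => (0.6:ℝ)) j ∈ Set.Icc (0:ℝ) 1) ∧
    (∀ j, (0.6:ℝ) * (1 + (att16 j).fold max 0 (fun _ => (0.6:ℝ))) ≤ 1) ∧
    ¬ (∀ j, (0.6:ℝ) * (1 + ∑ _k ∈ att16 j, (0.6:ℝ)) ≤ 1) := by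
  refine ⟨fun _ => by norm_num, fun j => ?maxBased, fun h => ?hCategorizer⟩
  case maxBased =>
    have hmax : (att16 j).fold max 0 (fun _ => (0.6:ℝ)) ≤ 0.6 :=
      (Finset.fold_max_le _).2 ⟨by norm_num, fun _ _ => le_rfl⟩
    linarith
  case hCategorizer =>
    have hsum : ∑ _k ∈ att16 0, (0.6:ℝ) = 2 * 0.6 := by
      rw [Finset.sum_const, att16, if_pos rfl, Finset.card_pair (by decide), nsmul_eq_mul]
      norm_num
    linarith [h 0]
end
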